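/- Let x ≤ w in S_n and suppose x(i) < x(i') for some i < i' with rk_x(i, x(i)) > rk_w(i, x(i)) (i.e., the point (i, x(i)) lies where rk_x exceeds rk_w). Then there exists i'' such that x < x·t_{{i, i''}} ≤ w. -/
import Mathlib


open Equiv

/-- Rank function: `rk w i j = #{u = 1,...,i : w(u) ≤ j}` (1-based via `Fin`). -/
def rk {n : ℕ} (w : Equiv.Perm (Fin n)) (i j : ℕ) : ℕ :=
  (Finset.univ.filter (fun u : Fin n => u.val + 1 ≤ i ∧ (w u).val + 1 ≤ j)).card

/-- Coxeter length = number of inversions. -/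
def len {n : ℕ} (w : Equiv.Perm (Fin n)) : ℕ :=
  (Finset.univ.filter (fun p : Fin n × Fin n => p.1 < p.2 ∧ w p.2 < w p.1)).card

/-- A transposition. -/
def IsTransposition {n : ℕ} (t : Equiv.Perm (Fin n)) : Prop :=
  ∃ i j : Fin n, i ≠ j ∧ t = Equiv.swap i j

/-- Bruhat order: generated by `x → x·t` for transpositions `t` increasing the length. -/
def bruhatLE {n : ℕ} : Equiv.Perm (Fin n) → Equiv.Perm (Fin n) → Prop :=
  Relation.ReflTransGen (fun x y => ∃ t, IsTransposition t ∧ y = x * t ∧ len x < len y)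

/-- Strict Bruhat order. -/
def bruhatLT {n : ℕ} (x y : Equiv.Perm (Fin n)) : Prop := bruhatLE x y ∧ x ≠ y

/-- Difference function `d_w(p,p')`. -/
def dOf {n : ℕ} (w : Equiv.Perm (Fin n)) (p q : ℕ × ℕ) : ℤ :=
  (rk w p.1 p.2 : ℤ) + rk w q.1 q.2 - rk w p.1 q.2 - rk w q.1 p.2

/-- Strictly comparable points: `(i'−i)(j'−j) > 0`. -/
def SCmp (p q : ℕ × ℕ) : Prop := (p.1 < q.1 ∧ p.2 < q.2) ∨ (q.1 < p.1 ∧ q.2 < p.2)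

/-- Corners of the rectangle spanned by `p`, `q`. -/
def corners (p q : ℕ × ℕ) : Set (ℕ × ℕ) := {(p.1, q.2), (q.1, p.2)}

open Finset

section Aux
variable {n : ℕ}


lemma rk_eq_sum (w : Perm (Fin n)) (i j : ℕ) :
    rk w i j = ∑ u : Fin n, if u.val + 1 ≤ i ∧ (w u).val + 1 ≤ j then 1 else 0 := by
  rw [rk, Finset.card_filter]

lemma sum_split_two (f : Fin n → ℕ) {a b : Fin n} (hab : a ≠ b) :
    ∑ v, f v = f a + f b + ∑ v ∈ (Finset.univ.erase a).erase b, f v := by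
  rw [← Finset.add_sum_erase _ f (mem_univ a),
    ← Finset.add_sum_erase _ f (Finset.mem_erase.2 ⟨hab.symm, mem_univ b⟩), add_assoc]

lemma len_eq_sum (w : Perm (Fin n)) :
    len w = ∑ u : Fin n, ∑ v : Fin n, if u < v ∧ w v < w u then 1 else 0 := by
  rw [len, Finset.card_filter, Fintype.sum_prod_type]

lemma rk_top (w : Perm (Fin n)) (j : ℕ) :
    rk w n j = ∑ v : Fin n, if v.val + 1 ≤ j then 1 else 0 := by
  rw [rk_eq_sum, ← Equiv.sum_comp w (fun v : Fin n => if v.val + 1 ≤ j then 1 else 0)]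
  refine Finset.sum_congr rfl fun u _ => ?_
  have := u.isLt
  split_ifs <;> omega

lemma card_val_le (k : ℕ) (hk : k ≤ n) :
    (∑ c : Fin n, if c.val + 1 ≤ k then 1 else 0) = k := by
  rw [Fin.sum_univ_eq_sum_range (fun m => if m + 1 ≤ k then 1 else 0)]
  calc ∑ m ∈ Finset.range n, (if m + 1 ≤ k then 1 else 0)
      = ∑ m ∈ Finset.range k, (if m + 1 ≤ k then 1 else 0) := by
        refine (Finset.sum_subset (Finset.range_subset_range.2 hk) fun m _ hmk => ?_).symm
        rw [Finset.mem_range] at hmk; rw [if_neg (by omega)]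
    _ = ∑ _m ∈ Finset.range k, 1 := by
        refine Finset.sum_congr rfl fun m hm => ?_
        rw [Finset.mem_range] at hm; rw [if_pos (by omega)]
    _ = k := by simp

lemma rk_mul_swap (x : Perm (Fin n)) {a b : Fin n} (hab : a < b) (hx : x a < x b) (i j : ℕ) :
    rk x i j = rk (x * Equiv.swap a b) i j
      + (if a.val + 1 ≤ i ∧ i ≤ b.val ∧ (x a).val + 1 ≤ j ∧ j ≤ (x b).val then 1 else 0) := by
  have hab' : a ≠ b := ne_of_lt hab
  have habv : a.val < b.val := hab
  have hxv : (x a).val < (x b).val := hx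
  have hswap : rk (x * Equiv.swap a b) i j
      = ∑ v : Fin n, if (Equiv.swap a b v).val + 1 ≤ i ∧ (x v).val + 1 ≤ j then 1 else 0 := by
    rw [rk_eq_sum,
      ← Equiv.sum_comp (Equiv.swap a b)
        (fun u : Fin n => if u.val + 1 ≤ i ∧ ((x * Equiv.swap a b) u).val + 1 ≤ j then 1 else 0)]
    refine Finset.sum_congr rfl fun v _ => ?_
    simp [Equiv.Perm.mul_apply, Equiv.swap_apply_self]
  rw [hswap, rk_eq_sum,
    sum_split_two (fun v : Fin n => if v.val + 1 ≤ i ∧ (x v).val + 1 ≤ j then 1 else 0) hab',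
    sum_split_two (fun v : Fin n => if (Equiv.swap a b v).val + 1 ≤ i ∧ (x v).val + 1 ≤ j then 1 else 0) hab']
  have htail : ∑ v ∈ (Finset.univ.erase a).erase b,
        (if (Equiv.swap a b v).val + 1 ≤ i ∧ (x v).val + 1 ≤ j then 1 else 0)
      = ∑ v ∈ (Finset.univ.erase a).erase b,
        (if v.val + 1 ≤ i ∧ (x v).val + 1 ≤ j then 1 else 0) := by
    refine Finset.sum_congr rfl fun v hv => ?_
    rw [Finset.mem_erase, Finset.mem_erase] at hv
    rw [Equiv.swap_apply_of_ne_of_ne hv.2.1 hv.1]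
  rw [htail, Equiv.swap_apply_left, Equiv.swap_apply_right]
  split_ifs <;> omega

lemma rk_cross (σ : Perm (Fin n)) {r s c e : ℕ} (hrs : r ≤ s) (hce : c ≤ e) :
    rk σ s e + rk σ r c = rk σ r e + rk σ s c
      + ∑ u : Fin n, (if r < u.val + 1 ∧ u.val + 1 ≤ s ∧ c < (σ u).val + 1 ∧ (σ u).val + 1 ≤ e
          then 1 else 0) := by
  simp only [rk_eq_sum, ← Finset.sum_add_distrib]
  refine Finset.sum_congr rfl fun u _ => ?_
  split_ifs <;> omega

lemma rk_row_succ (σ : Perm (Fin n)) (p : Fin n) (c : ℕ) :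
    rk σ (p.val + 1) c = rk σ p.val c + (if (σ p).val + 1 ≤ c then 1 else 0) := by
  rw [rk_eq_sum, rk_eq_sum, ← Finset.add_sum_erase _ _ (mem_univ p),
    ← Finset.add_sum_erase _ _ (mem_univ p)]
  have htail : ∑ u ∈ Finset.univ.erase p,
        (if u.val + 1 ≤ p.val + 1 ∧ (σ u).val + 1 ≤ c then 1 else 0)
      = ∑ u ∈ Finset.univ.erase p, (if u.val + 1 ≤ p.val ∧ (σ u).val + 1 ≤ c then 1 else 0) := by
    refine Finset.sum_congr rfl fun u hu => ?_
    have : u.val ≠ p.val := fun h => (Finset.mem_erase.1 hu).1 (Fin.ext h)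
    split_ifs <;> omega
  rw [htail]
  split_ifs <;> omega

lemma rowcount (w : Perm (Fin n)) (u : Fin n) :
    (∑ v : Fin n, if u < v ∧ w v < w u then 1 else 0) + rk w (u.val + 1) ((w u).val + 1)
      = (w u).val + 1 := by
  rw [rk_eq_sum, ← Finset.sum_add_distrib]
  have hcong : ∀ v ∈ Finset.univ (α := Fin n),
      ((if u < v ∧ w v < w u then 1 else 0)
        + (if v.val + 1 ≤ u.val + 1 ∧ (w v).val + 1 ≤ (w u).val + 1 then 1 else 0))
      = (if (w v).val + 1 ≤ (w u).val + 1 then 1 else 0) := by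
    intro v _
    by_cases hvu : v = u
    · subst hvu; simp [Fin.lt_def]
    · have h1 : v.val ≠ u.val := fun h => hvu (Fin.ext h)
      have h2 : (w v).val ≠ (w u).val := fun h => hvu (w.injective (Fin.ext h))
      simp only [Fin.lt_def]
      split_ifs <;> omega
  rw [Finset.sum_congr rfl hcong,
    Equiv.sum_comp w (fun c : Fin n => if c.val + 1 ≤ (w u).val + 1 then 1 else 0)]
  exact card_val_le _ (w u).isLt

lemma len_add (w : Perm (Fin n)) :
    len w + (∑ u : Fin n, rk w (u.val + 1) ((w u).val + 1)) = ∑ u : Fin n, ((w u).val + 1) := by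
  rw [len_eq_sum, ← Finset.sum_add_distrib]
  exact Finset.sum_congr rfl fun u _ => rowcount w u

lemma graph_sum_const (w : Perm (Fin n)) :
    ∑ u : Fin n, ((w u).val + 1) = ∑ u : Fin n, (u.val + 1) :=
  Equiv.sum_comp w (fun c : Fin n => c.val + 1)

lemma len_mul_swap_gt (x : Perm (Fin n)) {a b : Fin n} (hab : a < b) (hx : x a < x b) :
    len x < len (x * Equiv.swap a b) := by
  have hab' : a ≠ b := ne_of_lt hab
  have habv : a.val < b.val := hab
  have hxv : (x a).val < (x b).val := hx
  set t := Equiv.swap a b with ht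
  set y := x * t with hy
  have hyt : ∀ v : Fin n, y (t v) = x v := by
    intro v; simp [hy, ht, Equiv.Perm.mul_apply, Equiv.swap_apply_self]
  -- reindex T y
  have hTy : ∑ u : Fin n, rk y (u.val + 1) ((y u).val + 1)
      = ∑ v : Fin n, rk y ((t v).val + 1) ((x v).val + 1) := by
    rw [← Equiv.sum_comp t (fun u : Fin n => rk y (u.val + 1) ((y u).val + 1))]
    exact Finset.sum_congr rfl fun v _ => by rw [hyt]
  have hL2 : ∀ v : Fin n, rk x ((t v).val + 1) ((x v).val + 1)
      = rk y ((t v).val + 1) ((x v).val + 1)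
        + (if a.val + 1 ≤ (t v).val + 1 ∧ (t v).val + 1 ≤ b.val
            ∧ (x a).val + 1 ≤ (x v).val + 1 ∧ (x v).val + 1 ≤ (x b).val then 1 else 0) :=
    fun v => rk_mul_swap x hab hx _ _
  have h1 : ∑ v : Fin n, rk x ((t v).val + 1) ((x v).val + 1)
      = (∑ v : Fin n, rk y ((t v).val + 1) ((x v).val + 1))
        + ∑ v : Fin n, (if a.val + 1 ≤ (t v).val + 1 ∧ (t v).val + 1 ≤ b.val
            ∧ (x a).val + 1 ≤ (x v).val + 1 ∧ (x v).val + 1 ≤ (x b).val then 1 else 0) := by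
    rw [← Finset.sum_add_distrib]
    exact Finset.sum_congr rfl fun v _ => hL2 v
  have h2 : (∑ u : Fin n, rk x (u.val + 1) ((x u).val + 1))
        + (rk x (b.val + 1) ((x a).val + 1) + rk x (a.val + 1) ((x b).val + 1))
      = (∑ v : Fin n, rk x ((t v).val + 1) ((x v).val + 1))
        + (rk x (a.val + 1) ((x a).val + 1) + rk x (b.val + 1) ((x b).val + 1)) := by
    rw [sum_split_two (fun u : Fin n => rk x (u.val + 1) ((x u).val + 1)) hab',
      sum_split_two (fun v : Fin n => rk x ((t v).val + 1) ((x v).val + 1)) hab']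
    have htail : ∑ v ∈ (Finset.univ.erase a).erase b, rk x ((t v).val + 1) ((x v).val + 1)
        = ∑ v ∈ (Finset.univ.erase a).erase b, rk x (v.val + 1) ((x v).val + 1) := by
      refine Finset.sum_congr rfl fun v hv => ?_
      rw [Finset.mem_erase, Finset.mem_erase] at hv
      rw [ht, Equiv.swap_apply_of_ne_of_ne hv.2.1 hv.1]
    rw [htail, ht, Equiv.swap_apply_left, Equiv.swap_apply_right]
    ring
  have h3 : rk x (b.val + 1) ((x b).val + 1) + rk x (a.val + 1) ((x a).val + 1)
      ≥ rk x (a.val + 1) ((x b).val + 1) + rk x (b.val + 1) ((x a).val + 1) + 1 := by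
    have hcr := rk_cross x (r := a.val + 1) (s := b.val + 1) (c := (x a).val + 1)
      (e := (x b).val + 1) (by omega) (by omega)
    have hone : (1 : ℕ) ≤ ∑ u : Fin n,
        (if a.val + 1 < u.val + 1 ∧ u.val + 1 ≤ b.val + 1
            ∧ (x a).val + 1 < (x u).val + 1 ∧ (x u).val + 1 ≤ (x b).val + 1 then 1 else 0) := by
      refine Finset.sum_pos' (fun u _ => Nat.zero_le _) ⟨b, Finset.mem_univ b, ?_⟩
      rw [if_pos (by omega)]
      norm_num
    omega
  have hlenx := len_add x
  have hleny := len_add y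
  have hcx := graph_sum_const x
  have hcy := graph_sum_const y
  omega

lemma step_dom' {y : Perm (Fin n)} {a b : Fin n} (hab : a < b)
    (hlen : len y < len (y * Equiv.swap a b)) (p q : ℕ) :
    rk (y * Equiv.swap a b) p q ≤ rk y p q := by
  rcases lt_or_gt_of_ne (y.injective.ne (ne_of_lt hab)) with h | h
  · rw [rk_mul_swap y hab h p q]; omega
  · exfalso
    set z := y * Equiv.swap a b with hz
    have hza : z a = y b := by simp [hz, Equiv.Perm.mul_apply]
    have hzb : z b = y a := by simp [hz, Equiv.Perm.mul_apply]
    have hzz : z * Equiv.swap a b = y := by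
      rw [hz, mul_assoc, Equiv.swap_mul_self, mul_one]
    have := len_mul_swap_gt z hab (by rw [hza, hzb]; exact h)
    rw [hzz] at this
    omega

lemma step_dom {y : Perm (Fin n)} {a b : Fin n} (hab : a ≠ b)
    (hlen : len y < len (y * Equiv.swap a b)) (p q : ℕ) :
    rk (y * Equiv.swap a b) p q ≤ rk y p q := by
  rcases lt_or_gt_of_ne hab with h | h
  · exact step_dom' h hlen p q
  · rw [Equiv.swap_comm] at hlen ⊢
    exact step_dom' h hlen p q

lemma dom_of_le {x w : Perm (Fin n)} (h : bruhatLE x w) (p q : ℕ) : rk w p q ≤ rk x p q := by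
  induction h with
  | refl => exact le_rfl
  | tail _ hstep ih =>
    obtain ⟨t, ⟨a, b, hab, rfl⟩, rfl, hlen⟩ := hstep
    exact le_trans (step_dom hab hlen p q) ih

lemma keyM (x w : Perm (Fin n)) (dom : ∀ p q, rk w p q ≤ rk x p q)
    (i i' : Fin n) (hii' : i < i') (hx : x i < x i')
    (hrk : rk w (i.val + 1) ((x i).val + 1) < rk x (i.val + 1) ((x i).val + 1)) :
    ∃ i'' : Fin n, i < i'' ∧ x i < x i'' ∧
      ∀ r c, i.val + 1 ≤ r → r ≤ i''.val → (x i).val + 1 ≤ c → c ≤ (x i'').val →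
        rk w r c < rk x r c := by
  set ξ := (x i).val + 1 with hξ
  have hin : i.val < n := i.isLt
  obtain ⟨b, hgood, hbad, hbgt, hble⟩ :
      ∃ b : ℕ, (∀ r, i.val + 1 ≤ r → r < b → rk w r ξ < rk x r ξ)
        ∧ (b = n + 1 ∨ (b ≤ n ∧ rk x b ξ ≤ rk w b ξ)) ∧ i.val + 1 < b ∧ b ≤ n + 1 := by
    by_cases hb : ∃ r, i.val + 1 ≤ r ∧ r ≤ n ∧ rk x r ξ ≤ rk w r ξ
    · have hfs := Nat.find_spec hb
      refine ⟨Nat.find hb, ?_, Or.inr ⟨hfs.2.1, hfs.2.2⟩, ?_, by omega⟩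
      · intro r h1 h2
        have hmin := Nat.find_min hb h2
        simp only [not_and, not_le] at hmin
        exact hmin h1 (by omega)
      · have h1 : i.val + 1 ≤ Nat.find hb := hfs.1
        rcases Nat.lt_or_ge (i.val + 1) (Nat.find hb) with h | h
        · exact h
        · exfalso
          have : Nat.find hb = i.val + 1 := by omega
          rw [this] at hfs
          omega
    · push_neg at hb
      refine ⟨n + 1, ?_, Or.inl rfl, by omega, le_rfl⟩
      intro r h1 h2
      exact hb r h1 (by omega)
  have hSne : ∃ k : Fin n, i < k ∧ x i < x k ∧ k.val + 1 ≤ b := by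
    rcases hbad with hb1 | ⟨hb2, hb3⟩
    · exact ⟨i', hii', hx, by have := i'.isLt; omega⟩
    · by_contra hKP
      push_neg at hKP
      have hb1n : b - 1 < n := by omega
      set p : Fin n := ⟨b - 1, hb1n⟩ with hp
      have hpv : p.val = b - 1 := rfl
      have hip : i < p := by rw [Fin.lt_def]; omega
      have hxp : ¬ x i < x p := fun hcon => by
        have := hKP p hip hcon; omega
      have hxpn : x p ≠ x i := fun h => (ne_of_lt hip).symm (x.injective h)
      have hxpv : (x p).val + 1 ≤ ξ := by
        have h1 : ¬ (x i).val < (x p).val := fun h => hxp (by rw [Fin.lt_def]; exact h)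
        have h2 : (x p).val ≠ (x i).val := fun h => hxpn (Fin.ext h)
        omega
      have hrx := rk_row_succ x p ξ
      have hrw := rk_row_succ w p ξ
      rw [if_pos hxpv] at hrx
      have hg := hgood (b - 1) (by omega) (by omega)
      have hwle : rk w (p.val + 1) ξ ≤ rk w p.val ξ + 1 := by
        rw [hrw]; split_ifs <;> omega
      have hpv1 : p.val + 1 = b := by omega
      rw [hpv1] at hrx hwle
      rw [hpv] at hrx hwle
      omega
  obtain ⟨k0, hk0⟩ := hSne
  have hSne' : (Finset.univ.filter
      (fun k : Fin n => i < k ∧ x i < x k ∧ k.val + 1 ≤ b)).Nonempty :=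
    ⟨k0, Finset.mem_filter.2 ⟨Finset.mem_univ k0, hk0⟩⟩
  obtain ⟨i'', hmem, hminv⟩ := Finset.exists_min_image _ (fun k => (x k).val) hSne'
  rw [Finset.mem_filter] at hmem
  obtain ⟨-, hii'', hxii'', hi''b⟩ := hmem
  refine ⟨i'', hii'', hxii'', ?_⟩
  intro r c hr1 hr2 hc1 hc2
  have hi''n : i''.val < n := i''.isLt
  set s := min b n with hs
  have hrs : r ≤ s := by omega
  have hξc : ξ ≤ c := hc1
  have hcrx := rk_cross x (r := r) (s := s) (c := ξ) (e := c) hrs hξc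
  have hcrossx0 : (∑ u : Fin n, (if r < u.val + 1 ∧ u.val + 1 ≤ s ∧ ξ < (x u).val + 1
      ∧ (x u).val + 1 ≤ c then 1 else 0)) = 0 := by
    refine Finset.sum_eq_zero fun u _ => ?_
    rw [if_neg]
    rintro ⟨hu1, hu2, hu3, hu4⟩
    have hiu : i < u := by rw [Fin.lt_def]; omega
    have hxiu : x i < x u := by rw [Fin.lt_def]; omega
    have humem : u ∈ Finset.univ.filter
        (fun k : Fin n => i < k ∧ x i < x k ∧ k.val + 1 ≤ b) :=
      Finset.mem_filter.2 ⟨Finset.mem_univ u, hiu, hxiu, by omega⟩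
    have := hminv u humem
    omega
  rw [hcrossx0] at hcrx
  have hcrw := rk_cross w (r := r) (s := s) (c := ξ) (e := c) hrs hξc
  have heqs : rk w s ξ = rk x s ξ := by
    rcases hbad with hb1 | ⟨hb2, hb3⟩
    · have hsn : s = n := by omega
      rw [hsn, rk_top, rk_top]
    · have hsb : s = b := by omega
      rw [hsb]
      exact le_antisymm (dom b ξ) hb3
  have hdoms : rk w s c ≤ rk x s c := dom s c
  have hgr : rk w r ξ < rk x r ξ := hgood r hr1 (by omega)
  omega

lemma dom_after (x w : Perm (Fin n)) {i i'' : Fin n} (h1 : i < i'') (h2 : x i < x i'')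
    (hrect : ∀ r c, i.val + 1 ≤ r → r ≤ i''.val → (x i).val + 1 ≤ c → c ≤ (x i'').val →
      rk w r c < rk x r c)
    (dom : ∀ p q, rk w p q ≤ rk x p q) (p q : ℕ) :
    rk w p q ≤ rk (x * Equiv.swap i i'') p q := by
  have hL2 := rk_mul_swap x h1 h2 p q
  by_cases hc : i.val + 1 ≤ p ∧ p ≤ i''.val ∧ (x i).val + 1 ≤ q ∧ q ≤ (x i'').val
  · rw [if_pos hc] at hL2
    have := hrect p q hc.1 hc.2.1 hc.2.2.1 hc.2.2.2
    omega
  · rw [if_neg hc] at hL2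
    have := dom p q
    omega

def Phi (x w : Perm (Fin n)) : ℕ :=
  ∑ r ∈ Finset.range (n + 1), ∑ c ∈ Finset.range (n + 1), (rk x r c - rk w r c)

lemma phi_lt (x w : Perm (Fin n)) {i i'' : Fin n} (h1 : i < i'') (h2 : x i < x i'')
    (hrect : ∀ r c, i.val + 1 ≤ r → r ≤ i''.val → (x i).val + 1 ≤ c → c ≤ (x i'').val →
      rk w r c < rk x r c)
    (dom : ∀ p q, rk w p q ≤ rk x p q) :
    Phi (x * Equiv.swap i i'') w < Phi x w := by
  have hdom' := dom_after x w h1 h2 hrect dom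
  have hterm : ∀ p q, rk (x * Equiv.swap i i'') p q ≤ rk x p q := by
    intro p q
    have := rk_mul_swap x h1 h2 p q
    split_ifs at this <;> omega
  refine Finset.sum_lt_sum (fun r _ => Finset.sum_le_sum fun c _ => ?_)
    ⟨i.val + 1, Finset.mem_range.2 (by have := i.isLt; omega), ?_⟩
  · have h3 := hterm r c
    have h4 := hdom' r c
    omega
  · refine Finset.sum_lt_sum (fun c _ => ?_) ⟨(x i).val + 1,
      Finset.mem_range.2 (by have := (x i).isLt; omega), ?_⟩
    · have h3 := hterm (i.val + 1) c
      have h4 := hdom' (i.val + 1) c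
      omega
    · have hL2 := rk_mul_swap x h1 h2 (i.val + 1) ((x i).val + 1)
      rw [if_pos ⟨le_rfl, by exact h1, le_rfl, by exact h2⟩] at hL2
      have h4 := hdom' (i.val + 1) ((x i).val + 1)
      omega

lemma rk_first_row (x w : Perm (Fin n)) {i : Fin n}
    (hfirst : ∀ u, u < i → x u = w u) (j : ℕ) :
    rk x (i.val + 1) j + (if (w i).val + 1 ≤ j then 1 else 0)
      = rk w (i.val + 1) j + (if (x i).val + 1 ≤ j then 1 else 0) := by
  rw [rk_eq_sum, rk_eq_sum, ← Finset.add_sum_erase _ _ (Finset.mem_univ i),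
    ← Finset.add_sum_erase _ _ (Finset.mem_univ i)]
  have htail : ∑ u ∈ Finset.univ.erase i, (if u.val + 1 ≤ i.val + 1 ∧ (x u).val + 1 ≤ j then 1 else 0)
      = ∑ u ∈ Finset.univ.erase i, (if u.val + 1 ≤ i.val + 1 ∧ (w u).val + 1 ≤ j then 1 else 0) := by
    refine Finset.sum_congr rfl fun u hu => ?_
    have hune : u ≠ i := (Finset.mem_erase.1 hu).1
    by_cases hui : u.val + 1 ≤ i.val + 1
    · have : u < i := by
        rw [Fin.lt_def]
        rcases Nat.lt_or_ge u.val i.val with h | h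
        · exact h
        · exact absurd (Fin.ext (by omega)) hune
      rw [hfirst u this]
    · rw [if_neg (by omega), if_neg (by omega)]
  rw [htail]
  split_ifs <;> omega

lemma le_of_dom (w : Perm (Fin n)) : ∀ (N : ℕ) (x : Perm (Fin n)),
    (∀ p q, rk w p q ≤ rk x p q) → Phi x w < N → bruhatLE x w := by
  intro N
  induction N with
  | zero => intro x _ h; omega
  | succ N ih =>
    intro x dom hphi
    by_cases hxw : x = w
    · subst hxw; exact Relation.ReflTransGen.refl
    · have hne : ∃ u, x u ≠ w u := by
        by_contra h; push_neg at h; exact hxw (Equiv.ext h)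
      set S := Finset.univ.filter (fun u : Fin n => x u ≠ w u) with hS
      have hSne : S.Nonempty := by
        obtain ⟨u, hu⟩ := hne
        exact ⟨u, Finset.mem_filter.2 ⟨Finset.mem_univ u, hu⟩⟩
      set i := S.min' hSne with hi
      have hiS : i ∈ S := S.min'_mem hSne
      have hxi : x i ≠ w i := (Finset.mem_filter.1 hiS).2
      have hfirst : ∀ u, u < i → x u = w u := by
        intro u hu; by_contra h
        have : i ≤ u := S.min'_le u (Finset.mem_filter.2 ⟨Finset.mem_univ u, h⟩)
        exact absurd hu (not_lt.2 this)
      have hid := rk_first_row x w hfirst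
      have hxiv : (x i).val ≠ (w i).val := fun h => hxi (Fin.ext h)
      have hxwlt : (x i).val < (w i).val := by
        have h1 := hid ((w i).val + 1)
        have h2 := dom (i.val + 1) ((w i).val + 1)
        split_ifs at h1 <;> omega
      have hstrict : rk w (i.val + 1) ((x i).val + 1) < rk x (i.val + 1) ((x i).val + 1) := by
        have h1 := hid ((x i).val + 1)
        have h2 := dom (i.val + 1) ((x i).val + 1)
        split_ifs at h1 <;> omega
      set i' := x.symm (w i) with hi'
      have hxi' : x i' = w i := x.apply_symm_apply _
      have hne' : i' ≠ i := fun h => hxi (h ▸ hxi')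
      have hnlt : ¬ i' < i := fun hlt => by
        have h3 := hfirst i' hlt
        have h4 : i' = i := w.injective (by rw [← h3, hxi'])
        exact hne' h4
      have hii' : i < i' := lt_of_le_of_ne (not_lt.1 hnlt) (Ne.symm hne')
      have hxlt : x i < x i' := by rw [hxi']; exact Fin.lt_def.2 hxwlt
      obtain ⟨i'', h1, h2, hrect⟩ := keyM x w dom i i' hii' hxlt hstrict
      have hlen := len_mul_swap_gt x h1 h2
      have hdom' := dom_after x w h1 h2 hrect dom
      have hphi' := phi_lt x w h1 h2 hrect dom
      refine Relation.ReflTransGen.head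
        ⟨Equiv.swap i i'', ⟨i, i'', ne_of_lt h1, rfl⟩, rfl, hlen⟩ ?_
      exact ih (x * Equiv.swap i i'') hdom' (by omega)

theorem stmt7aux (x w : Equiv.Perm (Fin n)) (hxw : bruhatLE x w)
    (i i' : Fin n) (hii' : i < i') (hx : x i < x i')
    (hrk : rk w (i.val + 1) ((x i).val + 1) < rk x (i.val + 1) ((x i).val + 1)) :
    ∃ i'' : Fin n, i'' ≠ i ∧ bruhatLT x (x * Equiv.swap i i'') ∧
      bruhatLE (x * Equiv.swap i i'') w := by
  have dom : ∀ p q, rk w p q ≤ rk x p q := fun p q => dom_of_le hxw p q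
  obtain ⟨i'', h1, h2, hrect⟩ := keyM x w dom i i' hii' hx hrk
  have hlen := len_mul_swap_gt x h1 h2
  have hdom' := dom_after x w h1 h2 hrect dom
  refine ⟨i'', ne_of_gt h1, ⟨Relation.ReflTransGen.single
    ⟨Equiv.swap i i'', ⟨i, i'', ne_of_lt h1, rfl⟩, rfl, hlen⟩, fun he => ?_⟩,
    le_of_dom w (Phi (x * Equiv.swap i i'') w + 1) _ hdom' (by omega)⟩
  rw [← he] at hlen
  exact lt_irrefl _ hlen

end Aux

theorem stmt7 (n : ℕ) (x w : Equiv.Perm (Fin n)) (hxw : bruhatLE x w)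
    (i i' : Fin n) (hii' : i < i') (hx : x i < x i')
    (hrk : rk w (i.val + 1) ((x i).val + 1) < rk x (i.val + 1) ((x i).val + 1)) :
    ∃ i'' : Fin n, i'' ≠ i ∧ bruhatLT x (x * Equiv.swap i i'') ∧
      bruhatLE (x * Equiv.swap i i'') w := by
  exact stmt7aux x w hxw i i' hii' hx hrk
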